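/- arXiv:math/0210319 — 4 statements merged into one kernel-verified Lean document; each statement's English description precedes it below -/
import Mathlib

section
/- For θ > 0 and each positive integer n, the values e(λ) = θ^ℓ · n! / [θ]_n · ∏_{j=1}^ℓ 1/Λ_j, where λ = (λ_1,...,λ_ℓ) ranges over compositions of n, Λ_j = λ_j + ... + λ_ℓ, and [θ]_n = θ(θ+1)···(θ+n-1), sum to 1 over all compositions of n. -/
open Finset

noncomputable def risingFact (x : ℝ) (k : ℕ) : ℝ := ∏ i ∈ Finset.range k, (x + i)

/-! A composition of `n` is determined by its set `B ⊆ {1, …, n - 1}` of interior block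
boundaries, and its tail sums are `n` together with the `n - b`, `b ∈ B`. Hence
`θ ^ ℓ * ∏ j, 1 / Λ_j = (θ / n) * ∏ b ∈ B, θ / (n - b)`, and summing over all `B` gives
`(θ / n) * ∏_{m=1}^{n-1} (1 + θ / m) = [θ]_n / n!`. -/

theorem risingFact_succ (x : ℝ) (k : ℕ) : risingFact x (k + 1) = x * risingFact (x + 1) k := by
  simp only [risingFact, prod_range_succ', Nat.cast_zero, add_zero, Nat.cast_succ, add_assoc,
    add_comm (1 : ℝ)]
  ring

theorem risingFact_pos {x : ℝ} (hx : 0 < x) (k : ℕ) : 0 < risingFact x k :=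
  prod_pos fun i _ => by positivity

theorem prod_one_add_div_succ (x : ℝ) (k : ℕ) :
    ∏ i ∈ range k, (1 + x / ((i + 1 : ℕ) : ℝ)) = risingFact (x + 1) k / k.factorial := by
  induction k with
  | zero => simp [risingFact]
  | succ k ih =>
    rw [prod_range_succ, ih]
    simp only [risingFact, prod_range_succ, Nat.factorial_succ]
    push_cast
    field_simp
    ring

theorem prod_Ioo_last_reflect {M : Type*} [CommMonoid M] (f : ℕ → M) (k : ℕ) :
    ∏ b ∈ Ioo 0 (Fin.last (k + 1)), f (k + 1 - b) = ∏ i ∈ range k, f (i + 1) := by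
  refine prod_nbij' (fun b => k - b) (fun i => ⟨k - i, by omega⟩) ?_ ?_ ?_ ?_ ?_ <;>
    intro x hx <;>
    simp only [mem_range, mem_Ioo, Fin.lt_def, Fin.ext_iff, Fin.val_zero, Fin.val_last] at hx ⊢
  all_goals first | omega | (congr 1; omega)

namespace Composition

variable {n : ℕ} (c : Composition n)

theorem sum_drop_blocks (j : ℕ) : (c.blocks.drop j).sum = n - c.sizeUpTo j := by
  have := List.sum_take_add_sum_drop c.blocks j
  rw [c.blocks_sum] at this
  rw [sizeUpTo]
  omega

theorem prod_boundaries_erase_last {M : Type*} [CommMonoid M] (g : ℕ → M) :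
    ∏ b ∈ c.boundaries.erase (Fin.last n), g b = ∏ j ∈ range c.length, g (c.sizeUpTo j) := by
  have hlast : (univ : Finset (Fin (c.length + 1))).erase (Fin.last _) =
      univ.map Fin.castSuccEmb := by
    ext i
    cases i using Fin.lastCases <;> simp [Fin.castSucc_ne_last]
  rw [boundaries, ← c.boundary_last,
    show c.boundary (Fin.last _) = c.boundary.toEmbedding (Fin.last _) from rfl, ← map_erase,
    hlast, prod_map, prod_map, prod_range]
  rfl

theorem sum_eq_sum_powerset_Ioo {M : Type*} [AddCommMonoid M] (F : Finset (Fin (n + 1)) → M) :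
    ∑ c : Composition n, F c.boundaries =
      ∑ A ∈ (Ioo 0 (Fin.last n)).powerset, F (insert 0 (insert (Fin.last n) A)) := by
  have hsplit (d : CompositionAsSet n) :
      insert 0 (insert (Fin.last n) ((d.boundaries.erase 0).erase (Fin.last n))) =
        d.boundaries := by
    ext x
    have := d.zero_mem
    have := d.getLast_mem
    simp only [mem_insert, mem_erase]
    grind
  rw [← (compositionEquiv n).symm.sum_comp]
  simp only [compositionEquiv, Equiv.coe_fn_symm_mk, CompositionAsSet.toComposition_boundaries]
  refine sum_nbij' (fun d => (d.boundaries.erase 0).erase (Fin.last n))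
    (fun A => ⟨insert 0 (insert (Fin.last n) A), mem_insert_self _ _, by simp⟩) ?_ ?_ ?_ ?_ ?_
  · intro d _
    simp only [mem_powerset, subset_iff, mem_erase, mem_Ioo, Fin.pos_iff_ne_zero,
      Fin.lt_last_iff_ne_last]
    tauto
  · simp
  · exact fun d _ => CompositionAsSet.ext (hsplit d)
  · intro A hA
    ext x
    have := @mem_powerset.1 hA x
    simp only [mem_erase, mem_insert, mem_Ioo] at this ⊢
    grind
  · exact fun d _ => by rw [hsplit]

theorem sum_pow_length_mul_prod_inv_sum_drop (θ : ℝ) :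
    ∑ c : Composition n, θ ^ c.length * ∏ j ∈ range c.length, ((c.blocks.drop j).sum : ℝ)⁻¹ =
      risingFact θ n / n.factorial := by
  obtain _ | k := n
  · have hlen (c : Composition 0) : c.length = 0 := c.length_eq_zero.2 rfl
    simp [hlen, composition_card, risingFact]
  set g : ℕ → ℝ := fun m => θ / ((k + 1 - m : ℕ) : ℝ)
  have hweight (c : Composition (k + 1)) :
      θ ^ c.length * ∏ j ∈ range c.length, ((c.blocks.drop j).sum : ℝ)⁻¹ =
        ∏ b ∈ c.boundaries.erase (Fin.last (k + 1)), g b := by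
    rw [c.prod_boundaries_erase_last]
    simp only [g, c.sum_drop_blocks, div_eq_mul_inv, prod_mul_distrib, prod_const, card_range]
  have hinsert : ∀ A ∈ (Ioo 0 (Fin.last (k + 1))).powerset,
      ∏ b ∈ (insert 0 (insert (Fin.last (k + 1)) A)).erase (Fin.last (k + 1)), g b =
        g 0 * ∏ b ∈ A, g b := by
    intro A hA
    have h0 : (0 : Fin (k + 2)) ∉ A := fun h => by simpa using mem_powerset.1 hA h
    have hlast : Fin.last (k + 1) ∉ A := fun h => by simpa using mem_powerset.1 hA h
    rw [erase_insert_of_ne (Fin.last_pos.ne), erase_insert hlast, prod_insert h0]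
    rfl
  calc _ = ∑ A ∈ (Ioo 0 (Fin.last (k + 1))).powerset,
        ∏ b ∈ (insert 0 (insert (Fin.last (k + 1)) A)).erase (Fin.last (k + 1)), g b := by
        simp only [hweight]
        exact sum_eq_sum_powerset_Ioo fun B => ∏ b ∈ B.erase (Fin.last (k + 1)), g b
    _ = g 0 * ∏ b ∈ Ioo 0 (Fin.last (k + 1)), (1 + g b) := by
        rw [sum_congr rfl hinsert, ← mul_sum, prod_one_add]
    _ = θ / (k + 1) * (risingFact (θ + 1) k / k.factorial) := by
        rw [← prod_one_add_div_succ, ← prod_Ioo_last_reflect (fun m => 1 + θ / (m : ℝ))]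
        simp [g]
    _ = risingFact θ (k + 1) / (k + 1).factorial := by
        rw [risingFact_succ, Nat.factorial_succ]
        push_cast
        field_simp

end Composition

theorem orderedESF_sums_to_one_general (θ : ℝ) (hθ : 0 < θ) (n : ℕ) :
    ∑ c : Composition n,
      (θ ^ c.length * (n.factorial : ℝ) / risingFact θ n) *
        ∏ j ∈ Finset.range c.length, (((c.blocks.drop j).sum : ℝ))⁻¹ = 1 := by
  have hR : risingFact θ n ≠ 0 := (risingFact_pos hθ n).ne'
  calc _ = (n.factorial / risingFact θ n) * ∑ c : Composition n,
        θ ^ c.length * ∏ j ∈ range c.length, ((c.blocks.drop j).sum : ℝ)⁻¹ := by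
        rw [mul_sum]
        exact sum_congr rfl fun c _ => by ring
    _ = 1 := by
        rw [Composition.sum_pow_length_mul_prod_inv_sum_drop]
        field_simp

theorem orderedESF_sums_to_one (θ : ℝ) (hθ : 0 < θ) (n : ℕ) (hn : 1 ≤ n) :
    ∑ c : Composition n,
      (θ ^ c.length * (n.factorial : ℝ) / risingFact θ n) *
        ∏ j ∈ Finset.range c.length, (((c.blocks.drop j).sum : ℝ))⁻¹ = 1 :=
  orderedESF_sums_to_one_general θ hθ n
end

section
/- For θ > 0 and any composition λ = (λ_1,...,λ_ℓ) of n, the product ∏_{j=1}^ℓ q(Λ_j : λ_j), with q(n:m) = (θ/n)·(n!/(n-m)!)·[θ]_{n-m}/[θ]_n and Λ_j = λ_j + ... + λ_ℓ, equals the ordered Ewens formula e(λ) = θ^ℓ · n!/[θ]_n · ∏_{j=1}^ℓ 1/Λ_j. -/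
noncomputable def qESF (θ : ℝ) (n m : ℕ) : ℝ :=
  (θ / n) * ((n.factorial : ℝ) / ((n - m).factorial : ℝ)) *
    (risingFact θ (n - m) / risingFact θ n)

open Finset

theorem Finset.prod_range_div_of_ne_zero {G₀ : Type*} [CommGroupWithZero G₀] (f : ℕ → G₀)
    (hf : ∀ i, f i ≠ 0) (n : ℕ) : ∏ i ∈ range n, f (i + 1) / f i = f n / f 0 := by
  simpa using congrArg Units.val (prod_range_div (fun i => Units.mk0 (f i) (hf i)) n)

theorem List.sum_drop_eq_getElem_add {M : Type*} [AddMonoid M] (L : List M) (j : ℕ)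
    (hj : j < L.length) :
    (L.drop j).sum = L[j] + (L.drop (j + 1)).sum := by
  rw [List.drop_eq_getElem_cons hj, List.sum_cons]

theorem risingFact_ne_zero {θ : ℝ} (hθ : 0 < θ) (k : ℕ) : risingFact θ k ≠ 0 :=
  prod_ne_zero_iff.2 fun _ _ => by positivity

theorem qESF_add_left (θ : ℝ) (m k : ℕ) :
    qESF θ (m + k) m = θ * ((m + k : ℕ) : ℝ)⁻¹ *
      ((risingFact θ k / k.factorial) / (risingFact θ (m + k) / (m + k).factorial)) := by
  rw [qESF, Nat.add_sub_cancel_left, div_div_div_eq, div_eq_mul_inv θ]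
  ring

theorem prod_qESF_drop_sum {θ : ℝ} (hθ : 0 < θ) (L : List ℕ) :
    (∏ j : Fin L.length, qESF θ ((L.drop j).sum) (L.get j))
      = (θ ^ L.length * (L.sum.factorial : ℝ) / risingFact θ L.sum) *
          ∏ j ∈ range L.length, (((L.drop j).sum : ℝ))⁻¹ := by
  set Λ : ℕ → ℕ := fun j => (L.drop j).sum with hΛ
  set g : ℕ → ℝ := fun k => risingFact θ k / k.factorial with hg
  have hg0 : ∀ k, g k ≠ 0 := fun k => div_ne_zero (risingFact_ne_zero hθ k) (by positivity)
  have hstep (j : Fin L.length) :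
      qESF θ (Λ j) (L.get j) = θ * (Λ j : ℝ)⁻¹ * (g (Λ (j + 1)) / g (Λ j)) := by
    simp only [hΛ, hg, List.get_eq_getElem, L.sum_drop_eq_getElem_add j j.isLt, qESF_add_left]
  calc (∏ j : Fin L.length, qESF θ (Λ j) (L.get j))
      = ∏ j ∈ range L.length, θ * (Λ j : ℝ)⁻¹ * (g (Λ (j + 1)) / g (Λ j)) := by
        rw [← Fin.prod_univ_eq_prod_range]
        exact prod_congr rfl fun j _ => hstep j
    _ = θ ^ L.length * (∏ j ∈ range L.length, (Λ j : ℝ)⁻¹) * (g (Λ L.length) / g (Λ 0)) := by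
        rw [prod_mul_distrib, prod_mul_distrib, prod_const, card_range,
          prod_range_div_of_ne_zero (fun j => g (Λ j)) (fun j => hg0 _)]
    _ = _ := by
        simp only [hΛ, hg, List.drop_length, List.drop_zero, List.sum_nil, risingFact,
          prod_range_zero, Nat.factorial_zero, Nat.cast_one, div_one, one_div_div]
        ring

theorem product_form_eq_orderedESF_general (θ : ℝ) (hθ : 0 < θ) (n : ℕ)
    (c : Composition n) :
    (∏ j : Fin c.length, qESF θ ((c.blocks.drop j).sum) (c.blocksFun j))
      = (θ ^ c.length * (n.factorial : ℝ) / risingFact θ n) *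
          ∏ j ∈ Finset.range c.length, (((c.blocks.drop j).sum : ℝ))⁻¹ := by
  have h := prod_qESF_drop_sum hθ c.blocks
  rwa [c.blocks_sum] at h

theorem product_form_eq_orderedESF (θ : ℝ) (hθ : 0 < θ) (n : ℕ) (hn : 1 ≤ n)
    (c : Composition n) :
    (∏ j : Fin c.length, qESF θ ((c.blocks.drop j).sum) (c.blocksFun j))
      = (θ ^ c.length * (n.factorial : ℝ) / risingFact θ n) *
          ∏ j ∈ Finset.range c.length, (((c.blocks.drop j).sum : ℝ))⁻¹ :=
  product_form_eq_orderedESF_general θ hθ n c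
end

section
/- For 0 < α < 1 and 1 ≤ m ≤ n, the quantity q(n:m) = -C(α,m)·C(-α,n-m)/C(-α,n) is nonnegative and ∑_{m=1}^n q(n:m) = 1, i.e. q(n:·) is a probability distribution on {1,...,n}. -/
/-- generalized binomial coefficient C(x,k) = x(x-1)⋯(x-k+1)/k! -/
noncomputable def genChoose (x : ℝ) (k : ℕ) : ℝ :=
  (∏ i ∈ Finset.range k, (x - i)) / (k.factorial : ℝ)

noncomputable def qPSF (α : ℝ) (n m : ℕ) : ℝ :=
  -(genChoose α m * genChoose (-α) (n - m) / genChoose (-α) n)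

/-! By Chu–Vandermonde, `∑_{m=0}^n C(α,m) C(-α,n-m) = C(0,n) = 0` for `n ≥ 1`, so the terms with
`m ≥ 1` add up to `-C(-α,n)` and the `q(n:m)` add up to `1`. For `0 < α < 1`, `C(α,m)` has the sign
`(-1)^(m-1)` and `C(-α,k)` the sign `(-1)^k`, so these signs cancel in `q(n:m)`. -/

open Finset

theorem genChoose_eq_ringChoose (x : ℝ) (k : ℕ) : genChoose x k = Ring.choose x k := by
  rw [Ring.choose_eq_smul, ← Polynomial.aeval_eq_smeval, ← Polynomial.eval_map_algebraMap,
    descPochhammer_map, descPochhammer_eval_eq_prod_range, genChoose, smul_eq_mul, div_eq_inv_mul]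

theorem genChoose_add (x y : ℝ) (n : ℕ) :
    genChoose (x + y) n = ∑ k ∈ range (n + 1), genChoose x k * genChoose y (n - k) := by
  simp only [genChoose_eq_ringChoose, Ring.add_choose_eq n (Commute.all x y),
    Nat.sum_antidiagonal_eq_sum_range_succ_mk]

theorem genChoose_zero_right (x : ℝ) : genChoose x 0 = 1 := by simp [genChoose]

theorem genChoose_zero_left {n : ℕ} (hn : n ≠ 0) : genChoose 0 n = 0 := by
  rw [genChoose_eq_ringChoose, Ring.choose_zero_pos ℝ (Nat.pos_of_ne_zero hn)]

theorem sum_Icc_genChoose_mul_genChoose_neg {a : ℝ} {n : ℕ} (hn : n ≠ 0) :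
    ∑ m ∈ Icc 1 n, genChoose a m * genChoose (-a) (n - m) = -genChoose (-a) n := by
  have h := genChoose_add a (-a) n
  rw [add_neg_cancel, genChoose_zero_left hn, sum_range_eq_add_Ico _ n.add_one_pos,
    genChoose_zero_right, one_mul, Nat.sub_zero, Ico_add_one_right_eq_Icc] at h
  linarith

theorem neg_one_pow_mul_genChoose_neg (a : ℝ) (k : ℕ) :
    (-1) ^ k * genChoose (-a) k = (∏ i ∈ range k, (a + i)) / k.factorial := by
  have h := prod_neg (s := range k) fun i : ℕ => -a - i
  rw [card_range] at h
  rw [genChoose, mul_div_assoc', ← h]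
  congr 1
  exact prod_congr rfl fun i _ => by ring

theorem neg_one_pow_mul_genChoose_succ (a : ℝ) (m : ℕ) :
    (-1) ^ m * genChoose a (m + 1) = a * (∏ i ∈ range m, (i + 1 - a)) / (m + 1).factorial := by
  have h := prod_neg (s := range m) fun i : ℕ => a - (i + 1 : ℕ)
  rw [card_range] at h
  rw [genChoose, prod_range_succ', mul_div_assoc', ← mul_assoc, ← h, Nat.cast_zero, sub_zero,
    mul_comm]
  congr 2
  refine prod_congr rfl fun i _ => ?_
  push_cast
  ring

theorem neg_one_pow_mul_genChoose_neg_pos {a : ℝ} (ha : 0 < a) (k : ℕ) :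
    0 < (-1) ^ k * genChoose (-a) k := by
  rw [neg_one_pow_mul_genChoose_neg]
  positivity

theorem neg_one_pow_pred_mul_genChoose_pos {a : ℝ} (ha : 0 < a) (ha1 : a < 1) {m : ℕ}
    (hm : 1 ≤ m) : 0 < (-1) ^ (m - 1) * genChoose a m := by
  obtain ⟨j, rfl⟩ := Nat.exists_eq_add_of_le' hm
  rw [Nat.add_sub_cancel, neg_one_pow_mul_genChoose_succ]
  have hprod : 0 < ∏ i ∈ range j, ((i : ℝ) + 1 - a) :=
    prod_pos fun i _ => by linarith [(Nat.cast_nonneg i : (0 : ℝ) ≤ i)]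
  positivity

theorem neg_mul_div_eq_neg_one_pow_mul (x y z : ℝ) (j k : ℕ) :
    -(x * y / z) = ((-1) ^ j * x) * ((-1) ^ k * y) / ((-1) ^ (j + k + 1) * z) := by
  rw [show ((-1) ^ j * x) * ((-1) ^ k * y) = ((-1) ^ j * (-1) ^ k * (-1)) * -(x * y) by ring,
    pow_succ, pow_add, mul_div_mul_left _ _ (by simp), neg_div]

theorem qPSF_pos {α : ℝ} (hα : 0 < α) (hα1 : α < 1) {n m : ℕ} (hm : 1 ≤ m) (hmn : m ≤ n) :
    0 < qPSF α n m := by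
  rw [qPSF, neg_mul_div_eq_neg_one_pow_mul _ _ _ (m - 1) (n - m),
    show m - 1 + (n - m) + 1 = n by omega]
  exact div_pos (mul_pos (neg_one_pow_pred_mul_genChoose_pos hα hα1 hm)
    (neg_one_pow_mul_genChoose_neg_pos hα _)) (neg_one_pow_mul_genChoose_neg_pos hα n)

theorem sum_Icc_qPSF {α : ℝ} {n : ℕ} (hn : n ≠ 0) (hα : genChoose (-α) n ≠ 0) :
    ∑ m ∈ Icc 1 n, qPSF α n m = 1 := by
  simp only [qPSF, sum_neg_distrib, ← sum_div]
  rw [sum_Icc_genChoose_mul_genChoose_neg hn, neg_div, neg_neg, div_self hα]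

theorem qPSF_prob_dist (α : ℝ) (hα : 0 < α) (hα1 : α < 1) (n : ℕ) (hn : 1 ≤ n) :
    (∀ m ∈ Finset.Icc 1 n, 0 ≤ qPSF α n m) ∧
    ∑ m ∈ Finset.Icc 1 n, qPSF α n m = 1 := by
  refine ⟨fun m hm => ?_, sum_Icc_qPSF (Nat.one_le_iff_ne_zero.mp hn) ?_⟩
  · obtain ⟨hm, hmn⟩ := mem_Icc.mp hm
    exact (qPSF_pos hα hα1 hm hmn).le
  · exact right_ne_zero_of_mul (neg_one_pow_mul_genChoose_neg_pos hα n).ne'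
end

section
/- For θ > 0 and each n ≥ 1, the values g(λ) = n!/[θ]_n · ∏_{j=1}^ℓ 1/(λ_j · h_θ(Λ_j)), where h_θ(k) = ∑_{i=1}^k 1/(θ+i-1), λ ranges over compositions of n, and Λ_j = λ_j + ... + λ_ℓ, sum to 1. -/
/-- generalized harmonic number h_θ(k) = ∑_{i=1}^k 1/(θ+i-1) -/
noncomputable def genHarmonic (θ : ℝ) (k : ℕ) : ℝ := ∑ i ∈ Finset.range k, 1 / (θ + i)

/-!
Let `F(n) = ∑_λ ∏_j 1 / (λ_j h_θ(Λ_j))`, so `F(0) = 1`. Splitting off the first block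
`k + 1` of a composition of `n + 1` gives `h_θ(n + 1) F(n + 1) = ∑_{k + m = n} F(m) / (k + 1)`.
The sequence `r(n) = [θ]_n / n!` of coefficients of `(1 - x)^{-θ}` satisfies the same recursion:
`∑_{k + m = n} r(m) / (k + 1) = r(n + 1) h_θ(n + 1)` is the coefficient form of
`∂_θ (1 - x)^{-θ} = -log (1 - x) (1 - x)^{-θ}`, and it follows by induction from
`(m + 1) r(m + 1) = (θ + m) r(m)` alone. Hence `F(n) = [θ]_n / n!`.
-/

open Finset Finset.Nat

theorem genHarmonic_succ (θ : ℝ) (n : ℕ) :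
    genHarmonic θ (n + 1) = genHarmonic θ n + 1 / (θ + n) :=
  sum_range_succ _ _

theorem genHarmonic_pos {θ : ℝ} (hθ : 0 < θ) {n : ℕ} (hn : n ≠ 0) : 0 < genHarmonic θ n :=
  sum_pos (fun _ _ ↦ by positivity) (nonempty_range_iff.2 hn)

theorem risingFact_pos_s9 {θ : ℝ} (hθ : 0 < θ) (n : ℕ) : 0 < risingFact θ n :=
  prod_pos fun _ _ ↦ by positivity

theorem succ_mul_risingFact_div_factorial (θ : ℝ) (m : ℕ) :
    (m + 1) * (risingFact θ (m + 1) / (m + 1).factorial) =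
      (θ + m) * (risingFact θ m / m.factorial) := by
  rw [risingFact, prod_range_succ, ← risingFact, Nat.factorial_succ]
  push_cast
  field_simp

section Convolution

variable {θ : ℝ} {r : ℕ → ℝ}

theorem succ_mul_sum_antidiagonal_div_succ
    (hr : ∀ m : ℕ, (m + 1) * r (m + 1) = (θ + m) * r m) (n : ℕ) :
    (n + 2) * ∑ p ∈ antidiagonal (n + 1), r p.2 / (p.1 + 1) =
      (θ + n + 1) * ∑ p ∈ antidiagonal n, r p.2 / (p.1 + 1) + r (n + 1) := by
  have split : ∀ p ∈ antidiagonal (n + 1),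
      (n + 2 : ℝ) * (r p.2 / (p.1 + 1)) = p.2 * r p.2 / (p.1 + 1) + r p.2 := by
    intro p hp
    have hsum : (p.1 : ℝ) + p.2 = n + 1 := by exact_mod_cast mem_antidiagonal.1 hp
    rw [← mul_div_assoc, div_add' _ _ _ (by positivity)]
    congr 1
    linear_combination -r p.2 * hsum
  have shift : ∀ p ∈ antidiagonal n,
      ((p.2 + 1 : ℕ) : ℝ) * r (p.2 + 1) / (p.1 + 1) =
        (θ + n + 1) * (r p.2 / (p.1 + 1)) - r p.2 := by
    intro p hp
    have hsum : (p.1 : ℝ) + p.2 = n := by exact_mod_cast mem_antidiagonal.1 hp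
    push_cast
    rw [hr]
    field_simp
    linear_combination r p.2 * hsum
  -- split off the vanishing term `(n + 1, 0)` of the first sum and `(0, n + 1)` of the second
  rw [mul_sum, sum_congr rfl split, sum_add_distrib,
    sum_antidiagonal_succ' (f := fun p ↦ p.2 * r p.2 / (p.1 + 1)),
    sum_antidiagonal_succ (f := fun p ↦ r p.2), sum_congr rfl shift, sum_sub_distrib, ← mul_sum]
  simp only [Nat.cast_zero, zero_mul, zero_div, zero_add]
  ring

theorem sum_antidiagonal_div_succ_eq_mul_genHarmonic (hθ : ∀ i : ℕ, θ + i ≠ 0)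
    (hr : ∀ m : ℕ, (m + 1) * r (m + 1) = (θ + m) * r m) (n : ℕ) :
    ∑ p ∈ antidiagonal n, r p.2 / (p.1 + 1) = r (n + 1) * genHarmonic θ (n + 1) := by
  induction n with
  | zero =>
    have hθ0 : θ ≠ 0 := by simpa using hθ 0
    have hr0 : r 1 = θ * r 0 := by simpa using hr 0
    simp [genHarmonic, hr0, mul_comm θ, hθ0]
  | succ n ih =>
    have hrn : ((n : ℝ) + 2) * r (n + 1 + 1) = (θ + (n + 1 : ℕ)) * r (n + 1) := by
      have := hr (n + 1)
      push_cast at this ⊢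
      linear_combination this
    have hrn_div : ((n : ℝ) + 2) * r (n + 1 + 1) / (θ + (n + 1 : ℕ)) = r (n + 1) := by
      rw [hrn, mul_div_cancel_left₀ _ (hθ (n + 1))]
    apply mul_left_cancel₀ (by positivity : (n + 2 : ℝ) ≠ 0)
    rw [succ_mul_sum_antidiagonal_div_succ hr, ih, genHarmonic_succ θ (n + 1)]
    push_cast at hrn hrn_div ⊢
    linear_combination -genHarmonic θ (n + 1) * hrn - hrn_div

end Convolution

namespace Composition

theorem blocks_ne_nil_of_succ {n : ℕ} (c : Composition (n + 1)) : c.blocks ≠ [] :=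
  c.blocks_eq_nil.not.2 n.succ_ne_zero

theorem head!_cons_tail {n : ℕ} (c : Composition (n + 1)) :
    c.blocks.head! :: c.blocks.tail = c.blocks :=
  List.cons_head!_tail c.blocks_ne_nil_of_succ

theorem one_le_head! {n : ℕ} (c : Composition (n + 1)) : 1 ≤ c.blocks.head! :=
  c.one_le_blocks (List.head!_mem_self c.blocks_ne_nil_of_succ)

def consEquiv (n : ℕ) : (Σ k : Fin (n + 1), Composition (n - k)) ≃ Composition (n + 1) where
  toFun x :=
    { blocks := (x.1 + 1) :: x.2.blocks
      blocks_pos := by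
        rintro i (_ | ⟨_, hi⟩)
        exacts [Nat.succ_pos _, x.2.blocks_pos hi]
      blocks_sum := by
        have := x.1.2
        rw [List.sum_cons, x.2.blocks_sum]
        omega }
  invFun c :=
    have hsum : c.blocks.head! + c.blocks.tail.sum = n + 1 := by
      rw [← List.sum_cons, c.head!_cons_tail, c.blocks_sum]
    have hpos := c.one_le_head!
    ⟨⟨c.blocks.head! - 1, by omega⟩,
      ⟨c.blocks.tail, fun hi ↦ c.blocks_pos (List.mem_of_mem_tail hi), by simp only; omega⟩⟩
  left_inv _ := rfl
  right_inv c := Composition.ext <| by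
    change (c.blocks.head! - 1 + 1) :: c.blocks.tail = c.blocks
    rw [Nat.sub_add_cancel c.one_le_head!, c.head!_cons_tail]

theorem sum_succ {M : Type*} [AddCommMonoid M] (f : List ℕ → M) (n : ℕ) :
    ∑ c : Composition (n + 1), f c.blocks =
      ∑ p ∈ antidiagonal n, ∑ c : Composition p.2, f ((p.1 + 1) :: c.blocks) := by
  rw [← (consEquiv n).sum_comp, Fintype.sum_sigma, sum_antidiagonal_eq_sum_range_succ
    (fun k m ↦ ∑ c : Composition m, f ((k + 1) :: c.blocks)), ← Fin.sum_univ_eq_sum_range]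
  rfl

end Composition

noncomputable def compositionWeight (θ : ℝ) (l : List ℕ) : ℝ :=
  ∏ j : Fin l.length, 1 / ((l.get j : ℝ) * genHarmonic θ (l.drop j).sum)

theorem compositionWeight_cons (θ : ℝ) (a : ℕ) (l : List ℕ) :
    compositionWeight θ (a :: l) =
      1 / (a * genHarmonic θ (a + l.sum)) * compositionWeight θ l := by
  simp [compositionWeight, Fin.prod_univ_succ]

theorem sum_compositionWeight_succ (θ : ℝ) (n : ℕ) :
    ∑ c : Composition (n + 1), compositionWeight θ c.blocks =
      (∑ p ∈ antidiagonal n,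
          (∑ c : Composition p.2, compositionWeight θ c.blocks) / (p.1 + 1)) /
        genHarmonic θ (n + 1) := by
  rw [Composition.sum_succ, sum_div]
  refine sum_congr rfl fun p hp ↦ ?_
  rw [sum_div, sum_div]
  refine sum_congr rfl fun c _ ↦ ?_
  have hsum : p.1 + 1 + c.blocks.sum = n + 1 := by
    rw [c.blocks_sum, ← mem_antidiagonal.1 hp]
    ring
  rw [compositionWeight_cons, hsum, one_div_mul_eq_div, div_div]
  push_cast
  rfl

theorem sum_compositionWeight {θ : ℝ} (hθ : 0 < θ) (n : ℕ) :
    ∑ c : Composition n, compositionWeight θ c.blocks = risingFact θ n / n.factorial := by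
  induction n using Nat.strong_induction_on with
  | _ n ih =>
    rcases n with _ | n
    · have hnil (c : Composition 0) : compositionWeight θ c.blocks = 1 := by
        rw [compositionWeight, c.blocks_eq_nil.2 rfl]
        exact Fin.prod_univ_zero _
      simp [hnil, composition_card, risingFact]
    · have hconv := sum_antidiagonal_div_succ_eq_mul_genHarmonic
        (r := fun m ↦ risingFact θ m / m.factorial) (fun i ↦ by positivity)
        (succ_mul_risingFact_div_factorial θ) n
      rw [sum_compositionWeight_succ,
        sum_congr rfl fun p hp ↦ by rw [ih p.2 (Finset.Nat.antidiagonal.snd_lt hp)],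
        hconv, mul_div_cancel_right₀ _ (genHarmonic_pos hθ n.succ_ne_zero).ne']

theorem newSamplingFormula_sums_to_one_general (θ : ℝ) (hθ : 0 < θ) (n : ℕ) :
    ∑ c : Composition n,
      ((n.factorial : ℝ) / risingFact θ n) *
        ∏ j : Fin c.length,
          1 / ((c.blocksFun j : ℝ) * genHarmonic θ ((c.blocks.drop j).sum)) = 1 := by
  rw [← mul_sum]
  change _ * ∑ c : Composition n, compositionWeight θ c.blocks = 1
  rw [sum_compositionWeight hθ, div_mul_div_comm, mul_comm, div_self]
  exact mul_ne_zero (risingFact_pos_s9 hθ n).ne' (Nat.cast_ne_zero.2 n.factorial_ne_zero)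

theorem newSamplingFormula_sums_to_one (θ : ℝ) (hθ : 0 < θ) (n : ℕ) (hn : 1 ≤ n) :
    ∑ c : Composition n,
      ((n.factorial : ℝ) / risingFact θ n) *
        ∏ j : Fin c.length,
          1 / ((c.blocksFun j : ℝ) * genHarmonic θ ((c.blocks.drop j).sum)) = 1 :=
  newSamplingFormula_sums_to_one_general θ hθ n
end
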